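/- arXiv:2504.10922 — 9 statements merged into one kernel-verified Lean document; each statement's English description precedes it below -/
import Mathlib

section
/- Let k be a field of characteristic 0, K a field extension of k, and fix integers n, m ≥ 1 and j ≥ 1. Let A = MvPowerSeries (Fin n) k, J ⊆ A an ideal, R = A/J, and R_K = A_K/J_K the corresponding quotient over K, with ι : R → R_K the induced homomorphism and 𝔪 ⊆ R, 𝔪_K ⊆ R_K the ideals generated by the residue classes of the variables. Let f, f̃ : Fin m → R with f_i, f̃_i ∈ 𝔪 for all i. If there exists an invertible m×m matrix C with entries in R_K such that every entry of C − Id lies in 𝔪_K^j and ι(f̃_i) = Σ_l C_{i l} · ι(f_l) for all i, then there exists an invertible m×m matrix C' with entries in R such that every entry of C' − Id lies in 𝔪^j and f̃_i = Σ_l C'_{i l} · f_l for all i. -/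
/- Formal linearized-contact case of Theorem 4.1(1):
unipotent `ℛ^{(j)}`-equivalence over a field extension `K` of a characteristic-zero
field `k` implies `ℛ^{(j)}`-equivalence over `k`, for map-germs on a formal
scheme-germ `Spec R`, `R = k[[x₁,…,xₙ]]/J`. -/

set_option synthInstance.maxHeartbeats 1000000
set_option maxHeartbeats 1000000

noncomputable section

open MvPowerSeries

variable (k K : Type) [Field k] [Field K] [Algebra k K] (n : ℕ)

/-- Coefficient extension `k[[x]] → K[[x]]`. -/
def extHom : MvPowerSeries (Fin n) k →+* MvPowerSeries (Fin n) K :=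
  MvPowerSeries.map (algebraMap k K)

variable (J : Ideal (MvPowerSeries (Fin n) k))

/-- The extended ideal `J_K ⊆ K[[x]]`, generated by the image of `J`. -/
def idealK : Ideal (MvPowerSeries (Fin n) K) := J.map (extHom k K n)

/-- The induced homomorphism `ι : R = k[[x]]/J → R_K = K[[x]]/J_K`. -/
def iotaR : (MvPowerSeries (Fin n) k ⧸ J) →+* (MvPowerSeries (Fin n) K ⧸ idealK k K n J) :=
  Ideal.quotientMap _ (extHom k K n) Ideal.le_comap_map

/-- The residue class `x̄ₐ ∈ R`. -/
def xbar (a : Fin n) : MvPowerSeries (Fin n) k ⧸ J :=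
  Ideal.Quotient.mk J (MvPowerSeries.X a)

/-- The residue class `x̄ₐ ∈ R_K`. -/
def xbarK (a : Fin n) : MvPowerSeries (Fin n) K ⧸ idealK k K n J :=
  Ideal.Quotient.mk (idealK k K n J) (MvPowerSeries.X a)

/-- The ideal `𝔪 ⊆ R` generated by the classes of the variables. -/
def mR : Ideal (MvPowerSeries (Fin n) k ⧸ J) := Ideal.span (Set.range (xbar k n J))

/-- The ideal `𝔪_K ⊆ R_K` generated by the classes of the variables. -/
def mRK : Ideal (MvPowerSeries (Fin n) K ⧸ idealK k K n J) :=
  Ideal.span (Set.range (xbarK k K n J))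

/-
Choose a `k`-linear retraction `K → k` of `k ⊆ K` and apply it coefficientwise: this gives an
additive retraction `P : K[[x]] → k[[x]]` of `ι̂` which is `k[[x]]`-linear, `P (g * ι̂ a) = P g * a`.
Such a `P` maps `𝔞 K[[x]]` into `𝔞` for every ideal `𝔞`, so it descends to a retraction
`R_K → R` of `ι` with the same linearity, which maps `𝔪_K ^ j = (𝔪 ^ j) R_K` into `𝔪 ^ j`.
Applying it entrywise to `C` gives `C'`: linearity turns `ι f̃ = C ι f` into `f̃ = C' f`, and `C'` is
invertible because `C' ≡ 1` modulo `𝔪`, which lies in the Jacobson radical of `R`.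
-/

theorem Matrix.isUnit_of_sub_one_mem_jacobson_bot {R m : Type*} [CommRing R] [Fintype m]
    [DecidableEq m] {M : Matrix m m R} (hM : ∀ i l, (M - 1) i l ∈ (⊥ : Ideal R).jacobson) :
    IsUnit M := by
  set 𝔫 : Ideal R := (⊥ : Ideal R).jacobson
  have hM_mod : (Ideal.Quotient.mk 𝔫).mapMatrix M = 1 := by
    rw [← map_one (Ideal.Quotient.mk 𝔫).mapMatrix]
    ext i l
    exact Ideal.Quotient.eq.mpr (hM i l)
  have hdet : M.det - 1 ∈ 𝔫 := by
    rw [← Ideal.Quotient.eq, map_one, RingHom.map_det, hM_mod, Matrix.det_one]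
  exact (Matrix.isUnit_iff_isUnit_det M).mpr (Ideal.isUnit_of_sub_one_mem_jacobson_bot _ hdet)

namespace RingHom

variable {R S : Type*} [CommRing R] [CommRing S]

structure IsLinearRetraction (φ : R →+* S) (P : S →+ R) : Prop where
  map_one : P 1 = 1
  map_mul_apply : ∀ y a, P (y * φ a) = P y * a

namespace IsLinearRetraction

variable {φ : R →+* S} {P : S →+ R}

theorem apply_apply (hP : φ.IsLinearRetraction P) (a : R) : P (φ a) = a := by
  simpa [hP.map_one] using hP.map_mul_apply 1 a

theorem mem_of_mem_map (hP : φ.IsLinearRetraction P) {I : Ideal R} {y : S} (hy : y ∈ I.map φ) :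
    P y ∈ I := by
  suffices ∀ g, P (g * y) ∈ I by simpa using this 1
  induction hy using Submodule.span_induction with
  | mem _ h =>
    obtain ⟨a, ha, rfl⟩ := h
    exact fun g => hP.map_mul_apply g a ▸ I.mul_mem_left _ ha
  | zero => simp
  | add _ _ _ _ hx hy => exact fun g => by simpa [mul_add] using I.add_mem (hx g) (hy g)
  | smul r _ _ hx => exact fun g => by simpa [mul_assoc] using hx (g * r)

def quotientRetraction (hP : φ.IsLinearRetraction P) (I : Ideal R) :
    S ⧸ I.map φ →+ R ⧸ I :=
  QuotientAddGroup.lift (I.map φ).toAddSubgroup ((Ideal.Quotient.mk I).toAddMonoidHom.comp P)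
    fun _ hy => Ideal.Quotient.eq_zero_iff_mem.mpr (hP.mem_of_mem_map hy)

theorem quotientRetraction_mk (hP : φ.IsLinearRetraction P) (I : Ideal R) (y : S) :
    hP.quotientRetraction I (Ideal.Quotient.mk _ y) = Ideal.Quotient.mk I (P y) := rfl

theorem quotient (hP : φ.IsLinearRetraction P) (I : Ideal R) :
    (Ideal.quotientMap (I.map φ) φ Ideal.le_comap_map).IsLinearRetraction
      (hP.quotientRetraction I) where
  map_one := by
    rw [← _root_.map_one (Ideal.Quotient.mk _), quotientRetraction_mk, hP.map_one,
      _root_.map_one]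
  map_mul_apply y a := by
    obtain ⟨y, rfl⟩ := Ideal.Quotient.mk_surjective y
    obtain ⟨a, rfl⟩ := Ideal.Quotient.mk_surjective a
    rw [Ideal.quotientMap_mk, ← map_mul, quotientRetraction_mk, quotientRetraction_mk,
      hP.map_mul_apply, map_mul]

theorem map_sub_one_apply (hP : φ.IsLinearRetraction P) {m : Type*} [DecidableEq m]
    (C : Matrix m m S) (i l : m) : (C.map P - 1) i l = P ((C - 1) i l) := by
  rw [Matrix.sub_apply, Matrix.sub_apply, map_sub, Matrix.map_apply, Matrix.one_apply,
    Matrix.one_apply]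
  split_ifs <;> simp [hP.map_one]

theorem eq_sum_map_mul_of_map_eq_sum (hP : φ.IsLinearRetraction P) {m : Type*} [Fintype m]
    (C : Matrix m m S) {f g : m → R} {i : m} (h : φ (g i) = ∑ l, C i l * φ (f l)) :
    g i = ∑ l, C.map P i l * f l := by
  rw [← hP.apply_apply (g i), h, map_sum]
  simp only [hP.map_mul_apply, Matrix.map_apply]

theorem exists_GL_of_map_eq_sum (hP : φ.IsLinearRetraction P) {m : Type*} [Fintype m]
    [DecidableEq m] {𝔫 : Ideal R} (h𝔫 : 𝔫 ≤ (⊥ : Ideal R).jacobson) (C : Matrix m m S)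
    (hC : ∀ i l, (C - 1) i l ∈ 𝔫.map φ) {f g : m → R}
    (hfg : ∀ i, φ (g i) = ∑ l, C i l * φ (f l)) :
    ∃ C' : GL m R, (∀ i l, ((C' : Matrix m m R) - 1) i l ∈ 𝔫) ∧
      ∀ i, g i = ∑ l, (C' : Matrix m m R) i l * f l := by
  have hC' : ∀ i l, (C.map P - 1) i l ∈ 𝔫 := fun i l =>
    hP.map_sub_one_apply C i l ▸ hP.mem_of_mem_map (hC i l)
  have hunit : IsUnit (C.map P) :=
    Matrix.isUnit_of_sub_one_mem_jacobson_bot fun i l => h𝔫 (hC' i l)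
  exact ⟨hunit.unit, hC', fun i => hP.eq_sum_map_mul_of_map_eq_sum C (hfg i)⟩

end IsLinearRetraction

end RingHom

namespace MvPowerSeries

variable {σ R S : Type*} [CommRing R] [CommRing S]

def mapAddHom (f : S →+ R) : MvPowerSeries σ S →+ MvPowerSeries σ R :=
  f.compLeft (σ →₀ ℕ)

theorem coeff_mapAddHom (f : S →+ R) (g : MvPowerSeries σ S) (d : σ →₀ ℕ) :
    coeff d (mapAddHom f g) = f (coeff d g) := rfl

theorem isLinearRetraction_mapAddHom [Algebra R S] (pr : S →ₗ[R] R)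
    (hpr : ∀ c, pr (algebraMap R S c) = c) :
    (map (σ := σ) (algebraMap R S)).IsLinearRetraction (mapAddHom pr.toAddMonoidHom) where
  map_one := by
    classical
    ext d
    rw [coeff_mapAddHom, coeff_one, coeff_one]
    split_ifs
    · simpa using hpr 1
    · exact map_zero pr
  map_mul_apply g a := by
    classical
    ext d
    simp only [coeff_mapAddHom, coeff_mul, coeff_map, map_sum]
    refine Finset.sum_congr rfl fun x _ => ?_
    rw [mul_comm, ← Algebra.smul_def]
    simp [mul_comm]

end MvPowerSeries

theorem map_mR_iotaR : (mR k n J).map (iotaR k K n J) = mRK k K n J := by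
  rw [mR, mRK, Ideal.map_span, ← Set.range_comp]
  congr 2
  ext a
  simp [xbar, xbarK, iotaR, extHom, Ideal.quotientMap_mk]

theorem mR_le_jacobson_bot : mR k n J ≤ (⊥ : Ideal _).jacobson := by
  rw [mR, Ideal.span_le]
  rintro _ ⟨a, rfl⟩
  refine Ideal.mem_jacobson_bot.mpr fun y => ?_
  obtain ⟨y, rfl⟩ := Ideal.Quotient.mk_surjective y
  rw [xbar, ← map_mul, ← map_one (Ideal.Quotient.mk J), ← map_add]
  exact (isUnit_iff_constantCoeff.mpr (by simp)).map _

theorem linearized_contact_equiv_descends_filtered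
    (m j : ℕ) (hj : 1 ≤ j)
    (f ft : Fin m → (MvPowerSeries (Fin n) k ⧸ J))
    (H : ∃ C : GL (Fin m) (MvPowerSeries (Fin n) K ⧸ idealK k K n J),
        (∀ i l, ((C : Matrix (Fin m) (Fin m) (MvPowerSeries (Fin n) K ⧸ idealK k K n J))
            - 1) i l ∈ (mRK k K n J) ^ j) ∧
        (∀ i, iotaR k K n J (ft i) =
          ∑ l, (C : Matrix (Fin m) (Fin m) (MvPowerSeries (Fin n) K ⧸ idealK k K n J)) i l
            * iotaR k K n J (f l))) :
    ∃ C' : GL (Fin m) (MvPowerSeries (Fin n) k ⧸ J),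
      (∀ i l, ((C' : Matrix (Fin m) (Fin m) (MvPowerSeries (Fin n) k ⧸ J)) - 1) i l
          ∈ (mR k n J) ^ j) ∧
      (∀ i, ft i =
        ∑ l, (C' : Matrix (Fin m) (Fin m) (MvPowerSeries (Fin n) k ⧸ J)) i l * f l) := by
  obtain ⟨C, hC, hrel⟩ := H
  obtain ⟨pr, hpr⟩ := (Algebra.linearMap k K).exists_leftInverse_of_injective
    (LinearMap.ker_eq_bot.mpr (algebraMap k K).injective)
  have hP : (iotaR k K n J).IsLinearRetraction _ :=
    (MvPowerSeries.isLinearRetraction_mapAddHom pr (LinearMap.congr_fun hpr)).quotient J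
  have hmRj : (mR k n J) ^ j ≤ (⊥ : Ideal _).jacobson :=
    (Ideal.pow_le_self (by omega)).trans (mR_le_jacobson_bot k n J)
  refine hP.exists_GL_of_map_eq_sum hmRj _ (fun i l => ?_) hrel
  rw [Ideal.map_pow, map_mR_iotaR]
  exact hC i l
end
end

section
/- Let k be an algebraically closed field (of arbitrary characteristic), K a field extension of k, and fix integers n, m ≥ 1. Let f, f̃ : Fin m → MvPowerSeries (Fin n) k be tuples with constantCoeff f_i = 0 and constantCoeff f̃_i = 0 for all i, and let ι denote the coefficient extension to MvPowerSeries (Fin n) K. If there exists an invertible m×m matrix C with entries in MvPowerSeries (Fin n) K such that ι(f̃_i) = Σ_l C_{i l} · ι(f_l) for all i, then there exists an invertible m×m matrix C' with entries in MvPowerSeries (Fin n) k such that f̃_i = Σ_l C'_{i l} · f_l for all i. -/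
/-!
Apply a `k`-linear functional `φ : K → k` with `φ 1 = 1` to every coefficient. This map is linear
over `k⟦X⟧`, so it carries the relation `ι f̃ = C · ι f` over `K` to a relation `f̃ = C' · f` over
`k`, and `C'` is invertible as soon as `φ` applied entrywise to the constant-term matrix `C(0)` has
nonzero determinant. Writing `φ` in coordinates with respect to a `k`-basis of `K`, this condition
is the non-vanishing of a polynomial in the coordinates of `φ`. That polynomial is nonzero, since
at the basis itself it evaluates to `det C(0) ≠ 0`, and an algebraically closed field is infinite,
so it does not vanish at some `k`-rational point.
-/

open MvPowerSeries

section LinearFunctional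

variable {k A : Type*} [Field k] [Infinite k] [CommRing A] [Algebra k A]
  {m : Type*} [Fintype m] [DecidableEq m]

theorem exists_linearMap_map_one_eq_one_det_map_ne_zero (M : Matrix m m A) (hM : M.det ≠ 0) :
    ∃ φ : A →ₗ[k] k, φ 1 = 1 ∧ (M.map φ).det ≠ 0 := by
  let b := Module.Basis.ofVectorSpace k A
  -- `L a` is the generic functional `∑ⱼ Xⱼ · (j-th coordinate of a)`
  let L : A →ₗ[k] MvPolynomial _ k := b.constr k MvPolynomial.X
  have aeval_L : ∀ a, MvPolynomial.aeval (fun j => (b j : A)) (L a) = a := fun a =>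
    LinearMap.congr_fun (b.ext (f₁ := (MvPolynomial.aeval _).toLinearMap ∘ₗ L)
      (f₂ := LinearMap.id) fun j => by simp [L]) a
  have eval_L : ∀ c a, MvPolynomial.eval c (L a) = b.constr k c a := fun c a =>
    LinearMap.congr_fun (b.ext (f₁ := (MvPolynomial.aeval c).toLinearMap ∘ₗ L)
      (f₂ := b.constr k c) fun j => by simp [L]) a
  have hQ : L 1 * (M.map L).det ≠ 0 := fun h => hM <| by
    simpa [AlgHom.map_det, aeval_L, Matrix.map_map, Function.comp_def] using
      congr_arg (MvPolynomial.aeval fun j => (b j : A)) h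
  obtain ⟨c, hc⟩ : ∃ c, MvPolynomial.eval c (L 1 * (M.map L).det) ≠ 0 := by
    by_contra! h
    exact hQ (MvPolynomial.funext fun c => by simp [h c])
  rw [map_mul, RingHom.map_det, RingHom.mapMatrix_apply, Matrix.map_map] at hc
  simp only [Function.comp_def, eval_L] at hc
  set ψ := b.constr k c
  obtain ⟨hψ1, hψdet⟩ := mul_ne_zero_iff.mp hc
  refine ⟨(ψ 1)⁻¹ • ψ, inv_mul_cancel₀ hψ1, ?_⟩
  have hmap : M.map ⇑((ψ 1)⁻¹ • ψ) = (ψ 1)⁻¹ • M.map ψ := by ext; simp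
  rw [hmap, Matrix.det_smul]
  exact mul_ne_zero (pow_ne_zero _ (inv_ne_zero hψ1)) hψdet

end LinearFunctional

namespace MvPowerSeries

variable {σ k K : Type*}

section MapLinear

variable [CommSemiring k] [CommSemiring K] [Algebra k K]

def mapLinear (φ : K →ₗ[k] k) : MvPowerSeries σ K →ₗ[k] MvPowerSeries σ k where
  toFun g := fun d => φ (coeff d g)
  map_add' _ _ := funext fun _ => map_add φ _ _
  map_smul' _ _ := funext fun _ => map_smul φ _ _

@[simp]
theorem coeff_mapLinear (φ : K →ₗ[k] k) (g : MvPowerSeries σ K) (d : σ →₀ ℕ) :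
    coeff d (mapLinear φ g) = φ (coeff d g) := rfl

theorem constantCoeff_mapLinear (φ : K →ₗ[k] k) (g : MvPowerSeries σ K) :
    constantCoeff (mapLinear φ g) = φ (constantCoeff g) := rfl

theorem mapLinear_mul_map (φ : K →ₗ[k] k) (g : MvPowerSeries σ K) (h : MvPowerSeries σ k) :
    mapLinear φ (g * map (algebraMap k K) h) = mapLinear φ g * h := by
  classical
  ext d
  simp only [coeff_mapLinear, coeff_mul, coeff_map, map_sum]
  refine Finset.sum_congr rfl fun _ _ => ?_
  rw [mul_comm, ← Algebra.smul_def, map_smul, smul_eq_mul, mul_comm]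

theorem mapLinear_map {φ : K →ₗ[k] k} (hφ : φ 1 = 1) (h : MvPowerSeries σ k) :
    mapLinear φ (map (algebraMap k K) h) = h := by
  ext d
  rw [coeff_mapLinear, coeff_map, Algebra.algebraMap_eq_smul_one, map_smul, hφ, smul_eq_mul,
    mul_one]

end MapLinear

theorem isUnit_matrix_iff_isUnit_map_constantCoeff {R : Type*} [CommRing R] {m : Type*}
    [Fintype m] [DecidableEq m] (E : Matrix m m (MvPowerSeries σ R)) :
    IsUnit E ↔ IsUnit (E.map constantCoeff) := by
  rw [Matrix.isUnit_iff_isUnit_det, Matrix.isUnit_iff_isUnit_det, isUnit_iff_constantCoeff,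
    RingHom.map_det, RingHom.mapMatrix_apply]

end MvPowerSeries

theorem linearized_contact_equiv_descends_of_isAlgClosed_general
    (k K : Type) [Field k] [IsAlgClosed k] [Field K] [Algebra k K]
    (n m : ℕ)
    (f ft : Fin m → MvPowerSeries (Fin n) k)
    (H : ∃ C : GL (Fin m) (MvPowerSeries (Fin n) K),
        ∀ i, map (algebraMap k K) (ft i) =
          ∑ l, (C : Matrix (Fin m) (Fin m) (MvPowerSeries (Fin n) K)) i l
            * map (algebraMap k K) (f l)) :
    ∃ C' : GL (Fin m) (MvPowerSeries (Fin n) k),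
      ∀ i, ft i =
        ∑ l, (C' : Matrix (Fin m) (Fin m) (MvPowerSeries (Fin n) k)) i l * f l := by
  obtain ⟨C, hC⟩ := H
  set M : Matrix (Fin m) (Fin m) (MvPowerSeries (Fin n) K) := ↑C
  have hC0 : (M.map constantCoeff).det ≠ 0 :=
    ((Matrix.isUnit_iff_isUnit_det _).mp
      ((isUnit_matrix_iff_isUnit_map_constantCoeff _).mp C.isUnit)).ne_zero
  obtain ⟨φ, hφ1, hφdet⟩ := exists_linearMap_map_one_eq_one_det_map_ne_zero (k := k) _ hC0
  set E := M.map (mapLinear φ)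
  have hE0 : E.map constantCoeff = (M.map constantCoeff).map φ := by
    ext i l
    exact constantCoeff_mapLinear φ _
  have hE : IsUnit E := by
    rw [isUnit_matrix_iff_isUnit_map_constantCoeff, Matrix.isUnit_iff_isUnit_det, hE0]
    exact hφdet.isUnit
  refine ⟨hE.unit, fun i => ?_⟩
  calc ft i = mapLinear φ (map (algebraMap k K) (ft i)) := (mapLinear_map hφ1 _).symm
    _ = ∑ l, E i l * f l := by simp only [hC i, map_sum, mapLinear_mul_map, E, Matrix.map_apply]

theorem linearized_contact_equiv_descends_of_isAlgClosed
    (k K : Type) [Field k] [IsAlgClosed k] [Field K] [Algebra k K]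
    (n m : ℕ) (hn : 1 ≤ n) (hm : 1 ≤ m)
    (f ft : Fin m → MvPowerSeries (Fin n) k)
    (hf : ∀ i, constantCoeff (f i) = 0)
    (hft : ∀ i, constantCoeff (ft i) = 0)
    (H : ∃ C : GL (Fin m) (MvPowerSeries (Fin n) K),
        ∀ i, map (algebraMap k K) (ft i) =
          ∑ l, (C : Matrix (Fin m) (Fin m) (MvPowerSeries (Fin n) K)) i l
            * map (algebraMap k K) (f l)) :
    ∃ C' : GL (Fin m) (MvPowerSeries (Fin n) k),
      ∀ i, ft i =
        ∑ l, (C' : Matrix (Fin m) (Fin m) (MvPowerSeries (Fin n) k)) i l * f l :=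
  linearized_contact_equiv_descends_of_isAlgClosed_general k K n m f ft H
end

section
/- Let k be an algebraically closed field which is uncountable, K a field extension of k, and fix integers n, m ≥ 1. Let f, f̃ : Fin m → MvPowerSeries (Fin n) k with constantCoeff f_i = 0 and constantCoeff f̃_i = 0 for all i, and write ι for the coefficient extension to K (in both the n source variables and the m target variables). Suppose there exist tuples Φ : Fin n → MvPowerSeries (Fin n) K and Ψ : Fin m → MvPowerSeries (Fin m) K such that: each Φ_a and each Ψ_i has zero constant coefficient; the n×n matrix of linear coefficients of Φ (entry (a,b) being the coefficient of X_b in Φ_a) is invertible, and similarly the m×m matrix of linear coefficients of Ψ is invertible; and for every i, MvPowerSeries.subst (fun l => ι(f_l)) Ψ_i = MvPowerSeries.subst Φ (ι(f̃_i)). Then there exist tuples Φ' : Fin n → MvPowerSeries (Fin n) k and Ψ' : Fin m → MvPowerSeries (Fin m) k with the same properties over k (zero constant coefficients and invertible linear parts) such that MvPowerSeries.subst f Ψ'_i = MvPowerSeries.subst Φ' f̃_i for every i. -/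
/-! An equivalence over `K` involves only countably many scalars, the coefficients of the two
coordinate changes and the inverses of the determinants of their linear parts, so it is already
defined over a countably generated `k`-subalgebra `A ⊆ K`. Such an `A` has countable dimension
over `k`; its residue fields are then algebraic over the uncountable field `k` (a transcendental
`x` would give the uncountable independent family `(x - a)⁻¹`), hence equal to `k`. A `k`-point
`A → k` maps the equivalence over `A` to one over `k`. -/

noncomputable section

namespace MvPowerSeries

/-- Substitution of a tuple `g` of power series (each with zero constant coefficient)
into a power series `f`: the coefficient of the result at a multi-index `d` is
`∑ₑ (coeff e f) · coeff d (∏ i, (g i)^(e i))`, the sum running over the (sufficient)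
finite set of exponents `e` bounded by the total degree of `d`. -/
def subst' {σ τ R : Type} [Fintype σ] [DecidableEq σ] [Fintype τ] [CommRing R]
    (g : σ → MvPowerSeries τ R) (f : MvPowerSeries σ R) : MvPowerSeries τ R :=
  fun d => ∑ e ∈ Finset.Iic (Finsupp.equivFunOnFinite.symm fun _ : σ => ∑ i, d i),
    MvPowerSeries.coeff e f * MvPowerSeries.coeff d (∏ i, g i ^ e i)

/-- The matrix of linear (degree-one) coefficients of a tuple of power series:
entry `(a, b)` is the coefficient of `X b` in the `a`-th component. -/
def linearPart {σ τ R : Type} [Fintype σ] [Fintype τ] [CommRing R]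
    (Φ : σ → MvPowerSeries τ R) : Matrix σ τ R :=
  Matrix.of fun a b => MvPowerSeries.coeff (Finsupp.single b 1) (Φ a)

end MvPowerSeries

open MvPowerSeries Cardinal

universe u v

theorem Algebra.IsAlgebraic.of_rank_le_aleph0 {k : Type u} {F : Type v} [Field k] [Uncountable k]
    [Field F] [Algebra k F] (h : Module.rank k F ≤ ℵ₀) : Algebra.IsAlgebraic k F := by
  refine ⟨fun x => of_not_not fun hx => ?_⟩
  have hk : lift.{v} #k ≤ lift.{u} (Module.rank k F) :=
    (show Transcendental k x from hx).linearIndependent_sub_inv.cardinal_lift_le_rank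
  have := hk.trans (lift_le.mpr h)
  rw [lift_aleph0, lift_le_aleph0] at this
  exact this.not_gt (aleph0_lt_mk (α := k))

theorem nonempty_algHom_of_rank_le_aleph0 (k : Type*) {A : Type*} [Field k] [IsAlgClosed k]
    [Uncountable k] [CommRing A] [Nontrivial A] [Algebra k A] (h : Module.rank k A ≤ ℵ₀) :
    Nonempty (A →ₐ[k] k) := by
  obtain ⟨m, hm⟩ := Ideal.exists_maximal A
  let := Ideal.Quotient.field m
  have : Algebra.IsAlgebraic k (A ⧸ m) := .of_rank_le_aleph0 <|
    ((Ideal.Quotient.mkₐ k m).toLinearMap.rank_le_of_surjective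
      (Ideal.Quotient.mkₐ_surjective k m)).trans h
  exact ⟨IsAlgClosed.lift.comp (Ideal.Quotient.mkₐ k m)⟩

theorem Matrix.isUnit_of_map_eq {ι R S : Type*} [Fintype ι] [DecidableEq ι] [CommRing R]
    [CommRing S] {χ : R →+* S} (hχ : Function.Injective χ) {M : Matrix ι ι R}
    {N : Matrix ι ι S} (hMN : M.map χ = N) (h : IsUnit N.det) (hinv : ↑h.unit⁻¹ ∈ Set.range χ) :
    IsUnit M := by
  subst hMN
  obtain ⟨u, hu⟩ := hinv
  rw [Matrix.isUnit_iff_isUnit_det]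
  refine .of_mul_eq_one u (hχ ?_)
  rw [map_mul, hu, RingHom.map_det, RingHom.mapMatrix_apply, map_one]
  exact h.mul_val_inv

namespace MvPowerSeries

variable {σ τ R S : Type} [CommRing R] [CommRing S]

theorem exists_map_eq_of_forall_coeff_mem_range (χ : R →+* S) {F : MvPowerSeries σ S}
    (h : ∀ d, coeff d F ∈ Set.range χ) : ∃ F' : MvPowerSeries σ R, map χ F' = F := by
  choose c hc using h
  exact ⟨c, by ext d; exact hc d⟩

theorem map_algHom_map_algebraMap {k A B : Type*} [CommRing k] [CommRing A] [CommRing B]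
    [Algebra k A] [Algebra k B] (φ : A →ₐ[k] B) (F : MvPowerSeries σ k) :
    map (φ : A →+* B) (map (algebraMap k A) F) = map (algebraMap k B) F := by
  rw [map_map, φ.comp_algebraMap]

theorem map_injective {χ : R →+* S} (hχ : Function.Injective χ) :
    Function.Injective (map (σ := σ) χ) := fun F G h =>
  ext fun d => hχ (by rw [← coeff_map, ← coeff_map, h])

theorem linearPart_map [Fintype σ] [Fintype τ] (χ : R →+* S) (Φ : σ → MvPowerSeries τ R) :
    linearPart (fun a => map χ (Φ a)) = (linearPart Φ).map χ := by
  ext a b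
  simp [linearPart]

variable [Fintype σ] [DecidableEq σ] [Fintype τ]

theorem coeff_subst' (g : σ → MvPowerSeries τ R) (F : MvPowerSeries σ R) (d : τ →₀ ℕ) :
    coeff d (subst' g F) =
      ∑ e ∈ Finset.Iic (Finsupp.equivFunOnFinite.symm fun _ : σ => ∑ i, d i),
        coeff e F * coeff d (∏ i, g i ^ e i) :=
  rfl

theorem map_subst' (χ : R →+* S) (g : σ → MvPowerSeries τ R) (F : MvPowerSeries σ R) :
    map χ (subst' g F) = subst' (fun i => map χ (g i)) (map χ F) := by
  ext d
  simp only [coeff_map, coeff_subst', map_sum, map_mul, ← map_pow, ← map_prod]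

variable [DecidableEq τ]

/-- `(Φ, Ψ)` are coordinate changes of source and target with `Ψ ∘ f = ft ∘ Φ`. -/
def IsLeftRightEquivalence (f ft : τ → MvPowerSeries σ R) (Φ : σ → MvPowerSeries σ R)
    (Ψ : τ → MvPowerSeries τ R) : Prop :=
  (∀ a, constantCoeff (Φ a) = 0) ∧ (∀ i, constantCoeff (Ψ i) = 0) ∧
    IsUnit (linearPart Φ) ∧ IsUnit (linearPart Ψ) ∧ (∀ i, subst' f (Ψ i) = subst' Φ (ft i))

def LeftRightEquivalent (f ft : τ → MvPowerSeries σ R) : Prop :=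
  ∃ Φ Ψ, IsLeftRightEquivalence f ft Φ Ψ

namespace IsLeftRightEquivalence

variable {f ft : τ → MvPowerSeries σ R} {Φ : σ → MvPowerSeries σ R} {Ψ : τ → MvPowerSeries τ R}

theorem map (χ : R →+* S) (h : IsLeftRightEquivalence f ft Φ Ψ) :
    IsLeftRightEquivalence (fun i => map χ (f i)) (fun i => map χ (ft i))
      (fun a => map χ (Φ a)) (fun i => map χ (Ψ i)) := by
  obtain ⟨hΦ0, hΨ0, hΦ, hΨ, heq⟩ := h
  refine ⟨fun a => ?_, fun i => ?_, ?_, ?_, fun i => ?_⟩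
  · rw [constantCoeff_map, hΦ0, map_zero]
  · rw [constantCoeff_map, hΨ0, map_zero]
  · rw [linearPart_map]; exact hΦ.map χ.mapMatrix
  · rw [linearPart_map]; exact hΨ.map χ.mapMatrix
  · rw [← map_subst', ← map_subst', heq]

theorem of_map {χ : R →+* S} (hχ : Function.Injective χ) (hΦ : IsUnit (linearPart Φ))
    (hΨ : IsUnit (linearPart Ψ))
    (h : IsLeftRightEquivalence (fun i => MvPowerSeries.map χ (f i))
      (fun i => MvPowerSeries.map χ (ft i)) (fun a => MvPowerSeries.map χ (Φ a))
      (fun i => MvPowerSeries.map χ (Ψ i))) :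
    IsLeftRightEquivalence f ft Φ Ψ := by
  obtain ⟨hΦ0, hΨ0, -, -, heq⟩ := h
  refine ⟨fun a => hχ ?_, fun i => hχ ?_, hΦ, hΨ, fun i => map_injective hχ ?_⟩
  · rw [← constantCoeff_map, hΦ0, map_zero]
  · rw [← constantCoeff_map, hΨ0, map_zero]
  · rw [map_subst', map_subst', heq]

end IsLeftRightEquivalence

theorem LeftRightEquivalent.map (χ : R →+* S) {f ft : τ → MvPowerSeries σ R}
    (h : LeftRightEquivalent f ft) :
    LeftRightEquivalent (fun i => map χ (f i)) (fun i => map χ (ft i)) := by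
  obtain ⟨Φ, Ψ, hΦΨ⟩ := h
  exact ⟨_, _, hΦΨ.map χ⟩

theorem LeftRightEquivalent.exists_countable_adjoin {k K : Type} [CommRing k] [CommRing K]
    [Algebra k K] {f ft : τ → MvPowerSeries σ k}
    (h : LeftRightEquivalent (fun i => MvPowerSeries.map (algebraMap k K) (f i))
      (fun i => MvPowerSeries.map (algebraMap k K) (ft i))) :
    ∃ T : Set K, T.Countable ∧
      LeftRightEquivalent (fun i => MvPowerSeries.map (algebraMap k (Algebra.adjoin k T)) (f i))
        (fun i => MvPowerSeries.map (algebraMap k (Algebra.adjoin k T)) (ft i)) := by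
  obtain ⟨Φ, Ψ, hΦΨ⟩ := h
  have hΦ := (Matrix.isUnit_iff_isUnit_det _).mp hΦΨ.2.2.1
  have hΨ := (Matrix.isUnit_iff_isUnit_det _).mp hΦΨ.2.2.2.1
  set T : Set K := Set.range (fun p : σ × (σ →₀ ℕ) => coeff p.2 (Φ p.1)) ∪
    Set.range (fun p : τ × (τ →₀ ℕ) => coeff p.2 (Ψ p.1)) ∪ {↑hΦ.unit⁻¹, ↑hΨ.unit⁻¹}
  refine ⟨T, ((Set.countable_range _).union (Set.countable_range _)).union (by simp), ?_⟩
  set A := Algebra.adjoin k T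
  have hT_range : ∀ x ∈ T, x ∈ Set.range (A.val : A →+* K) :=
    fun x hx => ⟨⟨x, Algebra.subset_adjoin hx⟩, rfl⟩
  choose Φ' hΦ' using fun a => exists_map_eq_of_forall_coeff_mem_range (A.val : A →+* K)
    (F := Φ a) fun d => hT_range _ (.inl (.inl ⟨(a, d), rfl⟩))
  choose Ψ' hΨ' using fun i => exists_map_eq_of_forall_coeff_mem_range (A.val : A →+* K)
    (F := Ψ i) fun d => hT_range _ (.inl (.inr ⟨(i, d), rfl⟩))
  have hΦ'lin : (linearPart Φ').map (A.val : A →+* K) = linearPart Φ := by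
    rw [← linearPart_map]; simp only [hΦ']
  have hΨ'lin : (linearPart Ψ').map (A.val : A →+* K) = linearPart Ψ := by
    rw [← linearPart_map]; simp only [hΨ']
  refine ⟨Φ', Ψ', .of_map (χ := (A.val : A →+* K)) Subtype.val_injective ?_ ?_ ?_⟩
  · exact Matrix.isUnit_of_map_eq Subtype.val_injective hΦ'lin hΦ (hT_range _ (.inr (.inl rfl)))
  · exact Matrix.isUnit_of_map_eq Subtype.val_injective hΨ'lin hΨ (hT_range _ (.inr (.inr rfl)))
  · simpa only [map_algHom_map_algebraMap, hΦ', hΨ'] using hΦΨ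

end MvPowerSeries

theorem left_right_equiv_descends_of_isAlgClosed_uncountable_general
    (k K : Type) [Field k] [IsAlgClosed k] [Uncountable k] [Field K] [Algebra k K]
    (n m : ℕ)
    (f ft : Fin m → MvPowerSeries (Fin n) k)
    (H : ∃ (Φ : Fin n → MvPowerSeries (Fin n) K) (Ψ : Fin m → MvPowerSeries (Fin m) K),
      (∀ a, constantCoeff (Φ a) = 0) ∧
      (∀ i, constantCoeff (Ψ i) = 0) ∧
      IsUnit (linearPart Φ) ∧ IsUnit (linearPart Ψ) ∧
      (∀ i, subst' (fun l => map (algebraMap k K) (f l)) (Ψ i)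
          = subst' Φ (map (algebraMap k K) (ft i)))) :
    ∃ (Φ' : Fin n → MvPowerSeries (Fin n) k) (Ψ' : Fin m → MvPowerSeries (Fin m) k),
      (∀ a, constantCoeff (Φ' a) = 0) ∧
      (∀ i, constantCoeff (Ψ' i) = 0) ∧
      IsUnit (linearPart Φ') ∧ IsUnit (linearPart Ψ') ∧
      (∀ i, subst' f (Ψ' i) = subst' Φ' (ft i)) := by
  obtain ⟨T, hT, hA⟩ := LeftRightEquivalent.exists_countable_adjoin H
  obtain ⟨φ⟩ := nonempty_algHom_of_rank_le_aleph0 k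
    ((Algebra.rank_adjoin_le T).trans (max_le hT.le_aleph0 le_rfl))
  show LeftRightEquivalent f ft
  simpa only [map_algHom_map_algebraMap, Algebra.algebraMap_self, map_id, RingHom.id_apply] using
    hA.map (φ : Algebra.adjoin k T →+* k)

theorem left_right_equiv_descends_of_isAlgClosed_uncountable
    (k K : Type) [Field k] [IsAlgClosed k] [Uncountable k] [Field K] [Algebra k K]
    (n m : ℕ) (hn : 1 ≤ n) (hm : 1 ≤ m)
    (f ft : Fin m → MvPowerSeries (Fin n) k)
    (hf : ∀ i, constantCoeff (f i) = 0)
    (hft : ∀ i, constantCoeff (ft i) = 0)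
    (H : ∃ (Φ : Fin n → MvPowerSeries (Fin n) K) (Ψ : Fin m → MvPowerSeries (Fin m) K),
      (∀ a, constantCoeff (Φ a) = 0) ∧
      (∀ i, constantCoeff (Ψ i) = 0) ∧
      IsUnit (linearPart Φ) ∧ IsUnit (linearPart Ψ) ∧
      (∀ i, subst' (fun l => map (algebraMap k K) (f l)) (Ψ i)
          = subst' Φ (map (algebraMap k K) (ft i)))) :
    ∃ (Φ' : Fin n → MvPowerSeries (Fin n) k) (Ψ' : Fin m → MvPowerSeries (Fin m) k),
      (∀ a, constantCoeff (Φ' a) = 0) ∧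
      (∀ i, constantCoeff (Ψ' i) = 0) ∧
      IsUnit (linearPart Φ') ∧ IsUnit (linearPart Ψ') ∧
      (∀ i, subst' f (Ψ' i) = subst' Φ' (ft i)) :=
  left_right_equiv_descends_of_isAlgClosed_uncountable_general k K n m f ft H
end
end

section
/- Let k be a commutative ring and K a commutative k-algebra which is faithfully flat as a k-module. Let W be a k-module and V ⊆ W a k-submodule. Then for every w ∈ W: if the element (1 : K) ⊗ₜ w of K ⊗[k] W lies in the base-changed submodule V.baseChange K (the image of K ⊗[k] V in K ⊗[k] W), then w ∈ V. In other words, (K ⊗ V) ∩ W = V inside K ⊗ W. -/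
open TensorProduct

theorem faithfullyFlat_baseChange_inter
    (k K : Type) [CommRing k] [CommRing K] [Algebra k K]
    [Module.FaithfullyFlat k K]
    (W : Type) [AddCommGroup W] [Module k W] (V : Submodule k W) (w : W)
    (h : (1 : K) ⊗ₜ[k] w ∈ V.baseChange K) : w ∈ V := by
  rwa [← Submodule.span_singleton_le_iff_mem, ← Submodule.baseChange_le_iff (A := K),
    Submodule.baseChange_span, Set.image_singleton, TensorProduct.mk_apply,
    Submodule.span_singleton_le_iff_mem]
end

section
/- Let k be an algebraically closed field and K a nontrivial commutative k-algebra. Let S be a set of polynomials in MvPolynomial ℕ k (polynomials in countably many variables, each involving only finitely many). Suppose there exists an assignment a : ℕ → K such that the evaluation of every p ∈ S at a (via the algebra map k → K) is zero. Then for every finite subset T of S there exists an assignment b : ℕ → k such that every p ∈ T evaluates to zero at b. -/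
/-!
A system with a solution in a nontrivial `k`-algebra `K` generates a proper ideal, since the
ideal lies in the kernel of evaluation at that solution. A finite subsystem involves only
finitely many variables, and there the weak Nullstellensatz turns a proper ideal into a common
zero with coordinates in the algebraically closed field `k`.
-/

namespace MvPolynomial

theorem zeroLocus_nonempty_of_ne_top {k K σ : Type*} [Field k] [Field K] [Algebra k K]
    [IsAlgClosed K] [Finite σ] {I : Ideal (MvPolynomial σ k)} (hI : I ≠ ⊤) :
    (zeroLocus K I).Nonempty := by
  obtain ⟨M, hM, hIM⟩ := I.exists_le_maximal hI
  obtain ⟨x, hx⟩ := eq_vanishingIdeal_singleton_of_isMaximal K hM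
  exact ⟨x, fun p hp => (mem_vanishingIdeal_singleton_iff x p).1 (hx ▸ hIM hp)⟩

variable {k K σ : Type*} [Field k] [IsAlgClosed k] [CommRing K] [Nontrivial K] [Algebra k K]

theorem exists_eval_eq_zero_of_aeval_eq_zero [Finite σ] {s : Set (MvPolynomial σ k)}
    (a : σ → K) (ha : ∀ p ∈ s, aeval a p = 0) : ∃ b : σ → k, ∀ p ∈ s, eval b p = 0 := by
  have hspan : Ideal.span s ≠ ⊤ :=
    ne_top_of_le_ne_top (RingHom.ker_ne_top (aeval a))
      (Ideal.span_le.2 fun p hp => RingHom.mem_ker.2 (ha p hp))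
  obtain ⟨b, hb⟩ := zeroLocus_nonempty_of_ne_top (K := k) hspan
  rw [zeroLocus_span] at hb
  exact ⟨b, hb⟩

theorem exists_eval_eq_zero_of_aeval_eq_zero_of_finite {s : Set (MvPolynomial σ k)}
    (hs : s.Finite) (a : σ → K) (ha : ∀ p ∈ s, aeval a p = 0) :
    ∃ b : σ → k, ∀ p ∈ s, eval b p = 0 := by
  set V : Set σ := ⋃ p ∈ s, (p.vars : Set σ)
  have : Finite V := (hs.biUnion fun p _ => p.vars.finite_toSet).to_subtype
  have hrename : ∀ p ∈ s, ∃ q : MvPolynomial V k, rename Subtype.val q = p := fun p hp =>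
    exists_rename_eq_of_vars_subset_range p _ Subtype.val_injective
      fun i hi => ⟨⟨i, Set.mem_biUnion hp hi⟩, rfl⟩
  obtain ⟨b, hb⟩ := exists_eval_eq_zero_of_aeval_eq_zero (s := rename (Subtype.val : V → σ) ⁻¹' s)
    (a ∘ Subtype.val) fun q hq => by rw [← aeval_rename]; exact ha _ hq
  refine ⟨Function.extend Subtype.val b 0, fun p hp => ?_⟩
  obtain ⟨q, rfl⟩ := hrename p hp
  rw [eval_rename, Function.extend_comp Subtype.val_injective]
  exact hb q hp

end MvPolynomial

theorem finite_subsystem_solvable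
    (k : Type) [Field k] [IsAlgClosed k]
    (K : Type) [CommRing K] [Nontrivial K] [Algebra k K]
    (S : Set (MvPolynomial ℕ k))
    (a : ℕ → K) (ha : ∀ p ∈ S, MvPolynomial.aeval a p = 0) :
    ∀ T : Finset (MvPolynomial ℕ k), ↑T ⊆ S →
      ∃ b : ℕ → k, ∀ p ∈ T, MvPolynomial.eval b p = 0 := fun T hT =>
  MvPolynomial.exists_eval_eq_zero_of_aeval_eq_zero_of_finite T.finite_toSet a
    fun p hp => ha p (hT hp)
end

section
/- Let k be a field of characteristic 0, n, m ≥ 1, A = MvPowerSeries (Fin n) k, B = MvPowerSeries (Fin m) k, and let f : Fin m → A be a tuple with constantCoeff f_i = 0 for all i. Then for every integer j ≥ 1 there exists an integer d ≥ 1 with the following property: whenever ξ : Derivation k A A is a k-linear derivation of A and g : Fin m → B is a tuple such that for every i the power series ξ(f_i) + MvPowerSeries.subst f (g_i) has vanishing coefficients in all total degrees < d, there exist a derivation ξ' : Derivation k A A and a tuple g' : Fin m → B such that ξ'(X_a) has vanishing coefficients in all total degrees ≤ j for every a, every g'_i has vanishing coefficients in all total degrees ≤ j, and ξ(f_i) +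 MvPowerSeries.subst f (g_i) = ξ'(f_i) + MvPowerSeries.subst f (g'_i) for all i. -/
/-! A tangent vector `ξ(f) + g ∘ f` is `Ψ (w, g)` for the linear map
`Ψ (w, g)ᵢ = ∑ₐ wₐ ∂ₐfᵢ + gᵢ ∘ f`, because a derivation of `k⟦X⟧` is determined by its
values `w = ξ ∘ X` on the variables. Let `F c` be the pairs `(w, g)` of order `≥ c` and `U c`
the tuples of order `≥ c`, so that `Ψ (F c) ⊆ U c`. Modulo `F c` the pairs form a
finite-dimensional space (polynomials of degree `< c`), so the descending chain
`Ψ⁻¹ (Ψ (F c) + U e)`, `e → ∞`, stabilizes: there is `d c` such that `Ψ p ∈ U (d c)` implies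
`Ψ p ∈ Ψ (F c) + U e` for every `e`. Applying this at the levels `c, c + 1, …` yields
corrections `xₛ ∈ F (c + s)` whose sum converges, lies in `F c` and has image `Ψ p`. -/

set_option synthInstance.maxHeartbeats 1000000
set_option maxHeartbeats 1000000

noncomputable section

namespace MvPowerSeries

/-- Substitution of a tuple `g` of power series (each with zero constant coefficient)
into a power series `f`: the coefficient of the result at a multi-index `d` is
`∑ₑ (coeff e f) · coeff d (∏ i, (g i)^(e i))`, the sum running over the (sufficient)
finite set of exponents `e` bounded by the total degree of `d`. -/
def tupleSubst {σ τ R : Type} [Fintype σ] [DecidableEq σ] [Fintype τ] [CommRing R]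
    (g : σ → MvPowerSeries τ R) (f : MvPowerSeries σ R) : MvPowerSeries τ R :=
  fun d => ∑ e ∈ Finset.Iic (Finsupp.equivFunOnFinite.symm fun _ : σ => ∑ i, d i),
    MvPowerSeries.coeff e f * MvPowerSeries.coeff d (∏ i, g i ^ e i)

end MvPowerSeries

open MvPowerSeries

section Filtration

variable {R V W : Type*} [Ring R] [AddCommGroup V] [Module R V] [AddCommGroup W] [Module R W]

def FiltrationComplete (F : ℕ → Submodule R V) : Prop :=
  ∀ x : ℕ → V, (∀ s, x s ∈ F s) → ∃ p, ∀ N, p - ∑ s ∈ Finset.range N, x s ∈ F N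

lemma FiltrationComplete.pi {ι : Type*} {M : ι → Type*} [∀ i, AddCommGroup (M i)]
    [∀ i, Module R (M i)] {F : ∀ i, ℕ → Submodule R (M i)}
    (hF : ∀ i, FiltrationComplete (F i)) :
    FiltrationComplete fun N => Submodule.pi Set.univ fun i => F i N := by
  intro x hx
  choose p hp using fun i => hF i (fun s => x s i) fun s => Submodule.mem_pi.1 (hx s) i trivial
  exact ⟨p, fun N => Submodule.mem_pi.2 fun i _ => by simpa [Finset.sum_apply] using hp i N⟩

lemma FiltrationComplete.prod {F : ℕ → Submodule R V} {G : ℕ → Submodule R W}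
    (hF : FiltrationComplete F) (hG : FiltrationComplete G) :
    FiltrationComplete fun N => (F N).prod (G N) := by
  intro x hx
  obtain ⟨p, hp⟩ := hF (fun s => (x s).1) fun s => (hx s).1
  obtain ⟨q, hq⟩ := hG (fun s => (x s).2) fun s => (hx s).2
  exact ⟨(p, q), fun N =>
    ⟨by simpa [Prod.fst_sum] using hp N, by simpa [Prod.snd_sum] using hq N⟩⟩

lemma isArtinian_quotient_of_sup_eq_top [IsArtinianRing R] {F L : Submodule R V} (hL : L.FG)
    (hFL : F ⊔ L = ⊤) : IsArtinian R (V ⧸ F) := by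
  have : Module.Finite R L := Module.Finite.iff_fg.2 hL
  have : Module.Finite R (V ⧸ F) := by
    refine Module.Finite.of_surjective (F.mkQ ∘ₗ L.subtype) fun x => ?_
    obtain ⟨v, rfl⟩ := F.mkQ_surjective x
    obtain ⟨a, ha, b, hb, rfl⟩ := Submodule.mem_sup.1 (hFL ▸ Submodule.mem_top : v ∈ F ⊔ L)
    exact ⟨⟨b, hb⟩, by simpa [Submodule.Quotient.eq] using F.neg_mem ha⟩
  exact isArtinian_of_fg_of_artinian'

lemma Submodule.pi_sup_pi_eq_top {ι : Type*} {M : ι → Type*} [∀ i, AddCommGroup (M i)]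
    [∀ i, Module R (M i)] {p q : ∀ i, Submodule R (M i)} (h : ∀ i, p i ⊔ q i = ⊤) :
    Submodule.pi Set.univ p ⊔ Submodule.pi Set.univ q = ⊤ := by
  refine eq_top_iff.2 fun x _ => ?_
  choose y hy z hz hyz using fun i =>
    Submodule.mem_sup.1 (h i ▸ Submodule.mem_top : x i ∈ p i ⊔ q i)
  exact Submodule.mem_sup.2 ⟨y, Submodule.mem_pi.2 fun i _ => hy i, z,
    Submodule.mem_pi.2 fun i _ => hz i, funext hyz⟩

theorem exists_comap_le_comap_map_sup (Ψ : V →ₗ[R] W) (F : Submodule R V)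
    [IsArtinian R (V ⧸ F)] {U : ℕ → Submodule R W} (hU : Antitone U) :
    ∃ d, ∀ c, (U d).comap Ψ ≤ (F.map Ψ ⊔ U c).comap Ψ := by
  set Q : ℕ → Submodule R V := fun c => (F.map Ψ ⊔ U c).comap Ψ
  have hFQ : ∀ c, F ≤ Q c := fun c => Submodule.map_le_iff_le_comap.1 le_sup_left
  have hQ : Antitone Q := fun c c' h => Submodule.comap_mono (sup_le_sup_left (hU h) _)
  obtain ⟨d, hd⟩ := IsArtinian.monotone_stabilizes
    ⟨fun c => OrderDual.toDual ((Q c).map F.mkQ), fun c c' h => Submodule.map_mono (hQ h)⟩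
  -- `Q` stabilizes since each `Q c` contains `F`, hence is determined by its image in `V ⧸ F`
  have hstab : ∀ c, d ≤ c → Q d = Q c := fun c h => by
    have hmap : (Q d).map F.mkQ = (Q c).map F.mkQ := hd c h
    have := congrArg (Submodule.comap F.mkQ) hmap
    rwa [Submodule.comap_map_mkQ, Submodule.comap_map_mkQ, sup_eq_right.2 (hFQ _),
      sup_eq_right.2 (hFQ _)] at this
  refine ⟨d, fun c => ?_⟩
  calc (U d).comap Ψ ≤ Q d := Submodule.comap_mono le_sup_right
    _ = Q (max d c) := hstab _ (le_max_left _ _)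
    _ ≤ Q c := hQ (le_max_right _ _)

theorem exists_mem_eq_of_approx (Ψ : V →ₗ[R] W) {F : ℕ → Submodule R V}
    {U : ℕ → Submodule R W} (hF : Antitone F) (hU : Antitone U) (hFU : ∀ N, (F N).map Ψ ≤ U N)
    (hsep : ∀ w, (∀ N, w ∈ U N) → w = 0) (hcomplete : FiltrationComplete F) {d : ℕ → ℕ}
    (hd : ∀ c, c ≤ d c)
    (happrox : ∀ c p, Ψ p ∈ U (d c) → ∃ y ∈ F c, Ψ (p - y) ∈ U (d (c + 1)))
    {c : ℕ} {p : V} (hp : Ψ p ∈ U (d c)) : ∃ q ∈ F c, Ψ q = Ψ p := by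
  choose y hyF hy using happrox
  -- `r s` is what remains of `p` after the corrections `x 0, …, x (s - 1)`
  let r : ∀ s, {p : V // Ψ p ∈ U (d (c + s))} :=
    fun s => Nat.rec ⟨p, hp⟩ (fun s r => ⟨r.1 - y _ r.1 r.2, hy _ _ r.2⟩) s
  let x : ℕ → V := fun s => y _ (r s).1 (r s).2
  have hxF : ∀ s, x s ∈ F (c + s) := fun s => hyF _ _ _
  have hr : ∀ N, (r N).1 = p - ∑ s ∈ Finset.range N, x s := by
    intro N
    induction N with
    | zero => simp [r]
    | succ N ih => rw [Finset.sum_range_succ, sub_add_eq_sub_sub, ← ih]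
  obtain ⟨q, hq⟩ := hcomplete x fun s => hF (Nat.le_add_left s c) (hxF s)
  refine ⟨q, ?_, sub_eq_zero.1 (hsep _ fun N => ?_)⟩
  · rw [← sub_add_cancel q (∑ s ∈ Finset.range c, x s)]
    exact add_mem (hq c) (sum_mem fun s _ => hF (Nat.le_add_right c s) (hxF s))
  · have hdiff : Ψ q - Ψ p = Ψ (q - ∑ s ∈ Finset.range N, x s) - Ψ (r N).1 := by
      rw [hr]; simp only [map_sub]; abel
    rw [hdiff]
    exact sub_mem (hFU N ⟨_, hq N, rfl⟩)
      (hU ((Nat.le_add_left N c).trans (hd _)) (r N).2)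

theorem exists_mem_eq_of_isArtinian_quotient (Ψ : V →ₗ[R] W) {F : ℕ → Submodule R V}
    {U : ℕ → Submodule R W} (hF : Antitone F) (hU : Antitone U) (hFU : ∀ N, (F N).map Ψ ≤ U N)
    (hsep : ∀ w, (∀ N, w ∈ U N) → w = 0) (hcomplete : FiltrationComplete F)
    [∀ c, IsArtinian R (V ⧸ F c)] (c : ℕ) :
    ∃ d, c ≤ d ∧ ∀ p, Ψ p ∈ U d → ∃ q ∈ F c, Ψ q = Ψ p := by
  choose d₀ hd₀ using fun c => exists_comap_le_comap_map_sup Ψ (F c) hU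
  let d : ℕ → ℕ := fun c => max c (d₀ c)
  have happrox : ∀ c p, Ψ p ∈ U (d c) → ∃ y ∈ F c, Ψ (p - y) ∈ U (d (c + 1)) := by
    intro c p hp
    obtain ⟨_, ⟨y, hy, rfl⟩, u, hu, hyu⟩ :=
      Submodule.mem_sup.1 (hd₀ c (d (c + 1)) (hU (le_max_right _ _) hp))
    exact ⟨y, hy, by rwa [map_sub, ← hyu, add_sub_cancel_left]⟩
  exact ⟨d c, le_max_left _ _, fun p hp =>
    exists_mem_eq_of_approx Ψ hF hU hFU hsep hcomplete (fun _ => le_max_left _ _)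
      happrox hp⟩

end Filtration

namespace MvPowerSeries

section Order

variable {ι σ τ R : Type*} [CommRing R]

variable (σ R) in
def orderAtLeast (c : ℕ∞) : Submodule R (MvPowerSeries σ R) where
  carrier := {φ | c ≤ φ.order}
  add_mem' ha hb := (le_min ha hb).trans min_order_le_add
  zero_mem' := by simp
  smul_mem' _ _ h := h.trans le_order_smul

lemma mem_orderAtLeast {c : ℕ∞} {φ : MvPowerSeries σ R} :
    φ ∈ orderAtLeast σ R c ↔ c ≤ φ.order := Iff.rfl

lemma mem_orderAtLeast_iff_coeff {c : ℕ} {φ : MvPowerSeries σ R} :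
    φ ∈ orderAtLeast σ R c ↔ ∀ e : σ →₀ ℕ, e.degree < c → coeff e φ = 0 :=
  ⟨fun h _ he => coeff_of_lt_order ((Nat.cast_lt.2 he).trans_le h), nat_le_order⟩

lemma orderAtLeast_antitone : Antitone (orderAtLeast σ R) := fun _ _ h _ hφ => h.trans hφ

lemma eq_zero_of_forall_mem_orderAtLeast {φ : MvPowerSeries σ R}
    (h : ∀ N : ℕ, φ ∈ orderAtLeast σ R N) : φ = 0 := by
  ext e
  exact mem_orderAtLeast_iff_coeff.1 (h (e.degree + 1)) e (Nat.lt_succ_self _)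

lemma X_mul_mem_orderAtLeast {c : ℕ} {φ : MvPowerSeries σ R} (a : σ)
    (hφ : φ ∈ orderAtLeast σ R c) : X a * φ ∈ orderAtLeast σ R (c + 1 : ℕ) := by
  have hX : 1 ≤ (X a : MvPowerSeries σ R).order :=
    one_le_order_iff_constCoeff_eq_zero.2 (constantCoeff_X a)
  rw [mem_orderAtLeast, Nat.cast_succ, add_comm]
  exact (add_le_add hX hφ).trans le_order_mul

lemma filtrationComplete_orderAtLeast :
    FiltrationComplete fun N : ℕ => orderAtLeast σ R N := by
  intro x hx
  let ψ : MvPowerSeries σ R := fun e => ∑ s ∈ Finset.range (e.degree + 1), coeff e (x s)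
  refine ⟨ψ, fun N => mem_orderAtLeast_iff_coeff.2 fun e he => ?_⟩
  rw [map_sub, map_sum, sub_eq_zero]
  change ∑ s ∈ Finset.range (e.degree + 1), coeff e (x s) = _
  refine Finset.sum_subset (Finset.range_subset_range.2 he) fun s _ hs => ?_
  exact mem_orderAtLeast_iff_coeff.1 (hx s) e (by simpa using hs)

lemma exists_fg_sup_orderAtLeast_eq_top [Finite σ] (N : ℕ) :
    ∃ L : Submodule R (MvPowerSeries σ R), L.FG ∧ orderAtLeast σ R N ⊔ L = ⊤ := by
  refine ⟨(MvPolynomial.restrictTotalDegree σ R N).map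
      (MvPolynomial.coeToMvPowerSeries.algHom R).toLinearMap,
    (Module.Finite.iff_fg.1 inferInstance).map _, eq_top_iff.2 fun φ _ => ?_⟩
  set t := truncTotal (N + 1) φ
  have ht : t ∈ MvPolynomial.restrictTotalDegree σ R N :=
    (MvPolynomial.mem_restrictTotalDegree σ N t).2
      (Nat.lt_succ_iff.1 (totalDegree_truncTotal_lt φ N.succ_ne_zero))
  have hφt : φ - t ∈ orderAtLeast σ R (N + 1 : ℕ) :=
    mem_orderAtLeast_iff_coeff.2 fun e he => by
      rw [map_sub, MvPolynomial.coeff_coe, coeff_truncTotal _ he, sub_self]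
  exact Submodule.mem_sup.2 ⟨φ - t, orderAtLeast_antitone (Nat.cast_le.2 N.le_succ) hφt, t,
    ⟨t, ht, by simp⟩, sub_add_cancel _ _⟩

variable (ι σ R) in
def piOrderAtLeast (c : ℕ∞) : Submodule R (ι → MvPowerSeries σ R) :=
  Submodule.pi Set.univ fun _ => orderAtLeast σ R c

lemma mem_piOrderAtLeast {c : ℕ∞} {x : ι → MvPowerSeries σ R} :
    x ∈ piOrderAtLeast ι σ R c ↔ ∀ i, x i ∈ orderAtLeast σ R c := by
  simp [piOrderAtLeast, Submodule.mem_pi]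

lemma piOrderAtLeast_antitone : Antitone (piOrderAtLeast ι σ R) := fun _ _ h _ hx =>
  mem_piOrderAtLeast.2 fun i => orderAtLeast_antitone h (mem_piOrderAtLeast.1 hx i)

lemma eq_zero_of_forall_mem_piOrderAtLeast {x : ι → MvPowerSeries σ R}
    (h : ∀ N : ℕ, x ∈ piOrderAtLeast ι σ R N) : x = 0 :=
  funext fun i => eq_zero_of_forall_mem_orderAtLeast fun N => mem_piOrderAtLeast.1 (h N) i

variable (ι σ R) in
lemma filtrationComplete_piOrderAtLeast :
    FiltrationComplete fun N : ℕ => piOrderAtLeast ι σ R N :=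
  FiltrationComplete.pi fun _ => filtrationComplete_orderAtLeast

variable (σ τ R) in
def pairFiltration (c : ℕ∞) :
    Submodule R ((σ → MvPowerSeries σ R) × (τ → MvPowerSeries τ R)) :=
  (piOrderAtLeast σ σ R c).prod (piOrderAtLeast τ τ R c)

lemma isArtinian_quotient_pairFiltration [Finite σ] [Finite τ] [IsArtinianRing R] (c : ℕ) :
    IsArtinian R (((σ → MvPowerSeries σ R) × (τ → MvPowerSeries τ R)) ⧸
      pairFiltration σ τ R c) := by
  obtain ⟨L₁, hL₁, hFL₁⟩ := exists_fg_sup_orderAtLeast_eq_top (σ := σ) (R := R) c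
  obtain ⟨L₂, hL₂, hFL₂⟩ := exists_fg_sup_orderAtLeast_eq_top (σ := τ) (R := R) c
  refine isArtinian_quotient_of_sup_eq_top
    ((Submodule.fg_pi fun _ => hL₁).prod (Submodule.fg_pi fun _ => hL₂)) ?_
  rw [pairFiltration, Submodule.prod_sup_prod, piOrderAtLeast, piOrderAtLeast,
    Submodule.pi_sup_pi_eq_top fun _ => hFL₁, Submodule.pi_sup_pi_eq_top fun _ => hFL₂,
    Submodule.prod_top]

end Order

section Derivation

variable {σ R : Type*} [CommRing R]

lemma exists_eq_sum_X_mul [Fintype σ] {ψ : MvPowerSeries σ R} (hψ : constantCoeff ψ = 0) :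
    ∃ h : σ → MvPowerSeries σ R, ψ = ∑ a, X a * h a := by
  classical
  cases isEmpty_or_nonempty σ
  · refine ⟨0, ?_⟩
    ext e
    rw [Subsingleton.elim e 0, coeff_zero_eq_constantCoeff_apply, hψ]
    simp
  -- the coefficient of each `e ≠ 0` goes to the summand of one variable `sel e` occurring in `e`
  have : ∀ e : σ →₀ ℕ, ∃ a, e ≠ 0 → e a ≠ 0 := fun e => by
    by_cases he : e = 0
    · exact ⟨Classical.arbitrary σ, fun h => (h he).elim⟩
    · obtain ⟨a, ha⟩ := Finsupp.ne_iff.1 he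
      exact ⟨a, fun _ => ha⟩
  choose sel hsel using this
  let h : σ → MvPowerSeries σ R := fun a e =>
    if sel (e + Finsupp.single a 1) = a then coeff (e + Finsupp.single a 1) ψ else 0
  have hcoeff : ∀ a e, coeff e (h a) =
      if sel (e + Finsupp.single a 1) = a then coeff (e + Finsupp.single a 1) ψ else 0 :=
    fun _ _ => rfl
  refine ⟨h, ?_⟩
  ext e
  simp only [map_sum, X_def, coeff_monomial_mul, one_mul, hcoeff]
  by_cases he : e = 0
  · subst he
    simp [hψ]
  rw [Finset.sum_eq_single (sel e)]
  · have hle := Finsupp.single_le_iff.2 (Nat.one_le_iff_ne_zero.2 (hsel e he))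
    rw [if_pos hle, tsub_add_cancel_of_le hle, if_pos rfl]
  · intro a _ ha
    split_ifs with hle hsa
    · rw [tsub_add_cancel_of_le hle] at hsa
      exact (ha hsa.symm).elim
    all_goals rfl
  · simp

variable [Fintype σ]

lemma derivation_eq_zero_of_forall_X {D : Derivation R (MvPowerSeries σ R) (MvPowerSeries σ R)}
    (hD : ∀ a, D (X a) = 0) : D = 0 := by
  have hC : ∀ φ, D φ = D (φ - C (constantCoeff φ)) := fun φ => by
    rw [map_sub, c_eq_algebraMap, D.map_algebraMap, sub_zero]
  have hC0 : ∀ φ : MvPowerSeries σ R, constantCoeff (φ - C (constantCoeff φ)) = 0 := fun φ => by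
    simp
  -- `D (∑ X a * h a) = ∑ X a * D (h a)` gains one order over the `D (h a)`
  have key : ∀ N : ℕ, ∀ ψ, constantCoeff ψ = 0 → D ψ ∈ orderAtLeast σ R N := by
    intro N
    induction N with
    | zero => intro ψ _; exact mem_orderAtLeast.2 (by simp)
    | succ N ih =>
      intro ψ hψ
      obtain ⟨h, rfl⟩ := exists_eq_sum_X_mul hψ
      simp only [map_sum, Derivation.leibniz, hD, smul_eq_mul, mul_zero, add_zero]
      exact sum_mem fun a _ => X_mul_mem_orderAtLeast a (hC (h a) ▸ ih _ (hC0 _))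
  refine Derivation.ext fun φ => ?_
  exact eq_zero_of_forall_mem_orderAtLeast fun N => hC φ ▸ key N _ (hC0 φ)

theorem derivation_ext {D₁ D₂ : Derivation R (MvPowerSeries σ R) (MvPowerSeries σ R)}
    (h : ∀ a, D₁ (X a) = D₂ (X a)) : D₁ = D₂ :=
  sub_eq_zero.1 <| derivation_eq_zero_of_forall_X fun a => by
    rw [Derivation.sub_apply, h, sub_self]

def mkDerivation (w : σ → MvPowerSeries σ R) :
    Derivation R (MvPowerSeries σ R) (MvPowerSeries σ R) :=
  ∑ a, w a • pderiv R a

lemma mkDerivation_apply (w : σ → MvPowerSeries σ R) (φ : MvPowerSeries σ R) :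
    mkDerivation w φ = ∑ a, w a * pderiv R a φ := by
  rw [mkDerivation, ← Derivation.coeFnAddMonoidHom_apply, map_sum, Finset.sum_apply]
  simp [Derivation.coeFnAddMonoidHom_apply]

@[simp]
lemma mkDerivation_X (w : σ → MvPowerSeries σ R) (b : σ) : mkDerivation w (X b) = w b := by
  classical
  simp [mkDerivation_apply, pderiv_X, Pi.single_apply]

lemma eq_mkDerivation (D : Derivation R (MvPowerSeries σ R) (MvPowerSeries σ R)) :
    D = mkDerivation fun a => D (X a) :=
  derivation_ext fun a => (mkDerivation_X (fun b => D (X b)) a).symm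

end Derivation

section Substitution

variable {σ τ R : Type} [Fintype σ] [Fintype τ] [DecidableEq τ] [CommRing R]
  (f : τ → MvPowerSeries σ R)

lemma coeff_tupleSubst (g : MvPowerSeries τ R) (d : σ →₀ ℕ) :
    coeff d (tupleSubst f g) = ∑ e ∈ Finset.Iic (Finsupp.equivFunOnFinite.symm
      fun _ : τ => ∑ i, d i), coeff e g * coeff d (∏ i, f i ^ e i) := rfl

lemma tupleSubst_add (g g' : MvPowerSeries τ R) :
    tupleSubst f (g + g') = tupleSubst f g + tupleSubst f g' := by
  ext d
  simp only [map_add, coeff_tupleSubst, add_mul, Finset.sum_add_distrib]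

lemma tupleSubst_smul (c : R) (g : MvPowerSeries τ R) :
    tupleSubst f (c • g) = c • tupleSubst f g := by
  ext d
  simp only [map_smul, coeff_tupleSubst, smul_eq_mul, mul_assoc, Finset.mul_sum]

variable {f} in
lemma le_order_tupleSubst (hf : ∀ i, constantCoeff (f i) = 0) (g : MvPowerSeries τ R) :
    g.order ≤ (tupleSubst f g).order := by
  refine le_order fun d hd => Finset.sum_eq_zero fun e _ => ?_
  by_cases he : (e.degree : ℕ∞) < g.order
  · rw [coeff_of_lt_order he, zero_mul]
  -- the monomial `∏ i, f i ^ e i` has order at least `degree e ≥ order g > degree d`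
  have hprod : (e.degree : ℕ∞) ≤ (∏ i, f i ^ e i).order := by
    rw [Finsupp.degree_eq_sum, Nat.cast_sum]
    exact (Finset.sum_le_sum fun i _ => le_order_pow_of_constantCoeff_eq_zero _ (hf i)).trans
      (le_order_prod _ _)
  rw [coeff_of_lt_order (hd.trans_le ((not_lt.1 he).trans hprod)), mul_zero]

end Substitution

section Tangent

variable {σ τ R : Type} [Fintype σ] [Fintype τ] [DecidableEq τ] [CommRing R]

def tangentMap (f : τ → MvPowerSeries σ R) :
    (σ → MvPowerSeries σ R) × (τ → MvPowerSeries τ R) →ₗ[R] τ → MvPowerSeries σ R where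
  toFun p i := mkDerivation p.1 (f i) + tupleSubst f (p.2 i)
  map_add' p q := by
    ext1 i
    simp only [mkDerivation_apply, Prod.fst_add, Prod.snd_add, Pi.add_apply, add_mul,
      Finset.sum_add_distrib, tupleSubst_add]
    abel
  map_smul' c p := by
    ext1 i
    simp only [mkDerivation_apply, Prod.smul_fst, Prod.smul_snd, Pi.smul_apply, smul_mul_assoc,
      ← Finset.smul_sum, tupleSubst_smul, smul_add, RingHom.id_apply]

@[simp]
lemma tangentMap_apply (f : τ → MvPowerSeries σ R) (p) (i : τ) :
    tangentMap f p i = mkDerivation p.1 (f i) + tupleSubst f (p.2 i) := rfl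

lemma map_tangentMap_pairFiltration_le {f : τ → MvPowerSeries σ R}
    (hf : ∀ i, constantCoeff (f i) = 0) (c : ℕ∞) :
    (pairFiltration σ τ R c).map (tangentMap f) ≤ piOrderAtLeast τ σ R c := by
  rintro _ ⟨⟨w, g⟩, ⟨hw, hg⟩, rfl⟩
  refine mem_piOrderAtLeast.2 fun i => add_mem ?_ ?_
  · rw [mkDerivation_apply]
    exact sum_mem fun a _ =>
      (mem_piOrderAtLeast.1 hw a).trans (le_self_add.trans le_order_mul)
  · exact (mem_piOrderAtLeast.1 hg i).trans (le_order_tupleSubst hf _)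

theorem exists_mem_pairFiltration_tangentMap_eq [IsArtinianRing R]
    {f : τ → MvPowerSeries σ R} (hf : ∀ i, constantCoeff (f i) = 0) (c : ℕ) :
    ∃ d, c ≤ d ∧ ∀ p, tangentMap f p ∈ piOrderAtLeast τ σ R d →
      ∃ q ∈ pairFiltration σ τ R c, tangentMap f q = tangentMap f p := by
  have := isArtinian_quotient_pairFiltration (σ := σ) (τ := τ) (R := R)
  exact exists_mem_eq_of_isArtinian_quotient (tangentMap f)
    (F := fun N : ℕ => pairFiltration σ τ R N) (U := fun N : ℕ => piOrderAtLeast τ σ R N)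
    (fun _ _ h => Submodule.prod_mono (piOrderAtLeast_antitone (Nat.cast_le.2 h))
      (piOrderAtLeast_antitone (Nat.cast_le.2 h)))
    (fun _ _ h => piOrderAtLeast_antitone (Nat.cast_le.2 h))
    (fun N => map_tangentMap_pairFiltration_le hf N)
    (fun _ => eq_zero_of_forall_mem_piOrderAtLeast)
    ((filtrationComplete_piOrderAtLeast σ σ R).prod
      (filtrationComplete_piOrderAtLeast τ τ R)) c

end Tangent

end MvPowerSeries

theorem artinRees_leftRight_tangent_space_general
    (k : Type) [Field k]
    (n m : ℕ)
    (f : Fin m → MvPowerSeries (Fin n) k)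
    (hf : ∀ i, constantCoeff (f i) = 0)
    (j : ℕ) :
    ∃ d : ℕ, 1 ≤ d ∧
      ∀ (ξ : Derivation k (MvPowerSeries (Fin n) k) (MvPowerSeries (Fin n) k))
        (g : Fin m → MvPowerSeries (Fin m) k),
        (∀ (i : Fin m) (e : Fin n →₀ ℕ), (∑ b, e b) < d →
          coeff e (ξ (f i) + tupleSubst f (g i)) = 0) →
        ∃ (ξ' : Derivation k (MvPowerSeries (Fin n) k) (MvPowerSeries (Fin n) k))
          (g' : Fin m → MvPowerSeries (Fin m) k),
          (∀ (a : Fin n) (e : Fin n →₀ ℕ), (∑ b, e b) ≤ j → coeff e (ξ' (X a)) = 0) ∧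
          (∀ (i : Fin m) (e : Fin m →₀ ℕ), (∑ b, e b) ≤ j → coeff e (g' i) = 0) ∧
          (∀ i, ξ (f i) + tupleSubst f (g i) = ξ' (f i) + tupleSubst f (g' i)) := by
  obtain ⟨d, hjd, hd⟩ := exists_mem_pairFiltration_tangentMap_eq hf (j + 1)
  refine ⟨d, by omega, fun ξ g hξg => ?_⟩
  have hξ : ∀ i, tangentMap f (fun a => ξ (X a), g) i = ξ (f i) + tupleSubst f (g i) :=
    fun i => by rw [tangentMap_apply, ← eq_mkDerivation]
  obtain ⟨⟨w, g'⟩, ⟨hw, hg'⟩, hq⟩ := hd (fun a => ξ (X a), g) <| mem_piOrderAtLeast.2 fun i =>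
    mem_orderAtLeast_iff_coeff.2 fun e he => by
      rw [hξ]; exact hξg i e (by rwa [← Finsupp.degree_eq_sum])
  refine ⟨mkDerivation w, g', fun a e he => ?_, fun i e he => ?_, fun i => ?_⟩
  · rw [mkDerivation_X]
    exact mem_orderAtLeast_iff_coeff.1 (mem_piOrderAtLeast.1 hw a) e
      (by rw [Finsupp.degree_eq_sum]; omega)
  · exact mem_orderAtLeast_iff_coeff.1 (mem_piOrderAtLeast.1 hg' i) e
      (by rw [Finsupp.degree_eq_sum]; omega)
  · rw [← hξ, ← hq, tangentMap_apply]

theorem artinRees_leftRight_tangent_space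
    (k : Type) [Field k] [CharZero k]
    (n m : ℕ) (hn : 1 ≤ n) (hm : 1 ≤ m)
    (f : Fin m → MvPowerSeries (Fin n) k)
    (hf : ∀ i, constantCoeff (f i) = 0)
    (j : ℕ) (hj : 1 ≤ j) :
    ∃ d : ℕ, 1 ≤ d ∧
      ∀ (ξ : Derivation k (MvPowerSeries (Fin n) k) (MvPowerSeries (Fin n) k))
        (g : Fin m → MvPowerSeries (Fin m) k),
        (∀ (i : Fin m) (e : Fin n →₀ ℕ), (∑ b, e b) < d →
          coeff e (ξ (f i) + tupleSubst f (g i)) = 0) →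
        ∃ (ξ' : Derivation k (MvPowerSeries (Fin n) k) (MvPowerSeries (Fin n) k))
          (g' : Fin m → MvPowerSeries (Fin m) k),
          (∀ (a : Fin n) (e : Fin n →₀ ℕ), (∑ b, e b) ≤ j → coeff e (ξ' (X a)) = 0) ∧
          (∀ (i : Fin m) (e : Fin m →₀ ℕ), (∑ b, e b) ≤ j → coeff e (g' i) = 0) ∧
          (∀ i, ξ (f i) + tupleSubst f (g i) = ξ' (f i) + tupleSubst f (g' i)) :=
  artinRees_leftRight_tangent_space_general k n m f hf j
end
end

section
/- Let k be a commutative ring, c ∈ k, and j ≥ 1 an integer. (a) If there exists a formal power series Φ ∈ PowerSeries k with c·Φ = c·X + X^{j+1}, then c is a unit of k; in particular, if c is not a unit, the map x ↦ c·x + x^{j+1} is not right-equivalent over k to the map x ↦ c·x. (b) If c is not a zero divisor and K = Localization.Away c, then there exists Φ ∈ PowerSeries K with constant coefficient 0, coefficient of X equal to 1, coefficients of X^2,…,X^j equal to 0, and (algebraMap k K c)·Φ = (algebraMap k K c)·X + X^{j+1}; hence over K the two maps are ℛ^{(j)}-equivalent. -/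
/-!
Comparing coefficients of `X^{j+1}` in `c·Φ = c·X + X^{j+1}` gives `c · coeff_{j+1} Φ = 1`, so
`c` must be a unit. Over `k[1/c]` the equation is solved by `Φ = X + c⁻¹ X^{j+1}`, which agrees
with `X` in all degrees `≤ j`.
-/

open PowerSeries

namespace PowerSeries

variable {R : Type*} [CommSemiring R]

theorem isUnit_of_isUnit_coeff_C_mul {c : R} {φ : R⟦X⟧} (n : ℕ)
    (h : IsUnit (coeff n (C c * φ))) : IsUnit c := by
  rw [coeff_C_mul] at h
  exact isUnit_of_mul_isUnit_left h

theorem coeff_C_mul_X_add_X_pow_self (c : R) {n : ℕ} (hn : n ≠ 1) :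
    coeff n (C c * X + X ^ n) = 1 := by
  simp [coeff_X, hn]

theorem coeff_X_add_C_mul_X_pow_of_lt (a : R) {i n : ℕ} (h : i < n) :
    coeff i (X + C a * X ^ n) = coeff i X := by
  simp [coeff_X_pow, h.ne]

theorem C_mul_X_add_C_mul_X_pow_of_mul_eq_one {c u : R} (h : c * u = 1) (n : ℕ) :
    C c * (X + C u * X ^ n) = C c * X + X ^ n := by
  rw [mul_add, ← mul_assoc, ← map_mul, h, map_one, one_mul]

end PowerSeries

theorem sharpness_nonFaithfullyFlat
    (k : Type) [CommRing k] (c : k) (j : ℕ) (hj : 1 ≤ j) :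
    -- (a) solvability of `c·Φ = c·X + X^{j+1}` over `k` forces `c` to be a unit
    ((∃ Φ : PowerSeries k,
        PowerSeries.C c * Φ = PowerSeries.C c * PowerSeries.X
          + PowerSeries.X ^ (j + 1)) → IsUnit c) ∧
    -- in particular, if `c` is not a unit then `c·x + x^{j+1}` is not
    -- right-equivalent to `c·x` over `k`
    (¬ IsUnit c → ¬ ∃ Φ : PowerSeries k,
        PowerSeries.constantCoeff Φ = 0 ∧ IsUnit (PowerSeries.coeff 1 Φ) ∧
        PowerSeries.C c * Φ = PowerSeries.C c * PowerSeries.X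
          + PowerSeries.X ^ (j + 1)) ∧
    -- (b) over `K = k[1/c]` the two germs are `ℛ^{(j)}`-equivalent
    (c ∈ nonZeroDivisors k →
      ∃ Φ : PowerSeries (Localization.Away c),
        PowerSeries.constantCoeff Φ = 0 ∧
        PowerSeries.coeff 1 Φ = 1 ∧
        (∀ i : ℕ, 2 ≤ i → i ≤ j → PowerSeries.coeff i Φ = 0) ∧
        PowerSeries.C (algebraMap k (Localization.Away c) c) * Φ =
          PowerSeries.C (algebraMap k (Localization.Away c) c)
            * PowerSeries.X + PowerSeries.X ^ (j + 1)) := by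
  have isUnit_of_solution :
      (∃ Φ : k⟦X⟧, C c * Φ = C c * X + X ^ (j + 1)) → IsUnit c := by
    rintro ⟨Φ, hΦ⟩
    refine isUnit_of_isUnit_coeff_C_mul (φ := Φ) (j + 1) ?_
    rw [hΦ, coeff_C_mul_X_add_X_pow_self c (by omega)]
    exact isUnit_one
  refine ⟨isUnit_of_solution, fun hc ⟨Φ, _, _, hΦ⟩ ↦ hc (isUnit_of_solution ⟨Φ, hΦ⟩),
    fun _ ↦ ⟨X + C (IsLocalization.Away.invSelf c) * X ^ (j + 1), ?_, ?_, ?_,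
      C_mul_X_add_C_mul_X_pow_of_mul_eq_one (IsLocalization.Away.mul_invSelf c) _⟩⟩
  · rw [← coeff_zero_eq_constantCoeff_apply, coeff_X_add_C_mul_X_pow_of_lt _ (by omega),
      coeff_zero_X]
  · rw [coeff_X_add_C_mul_X_pow_of_lt _ (by omega), coeff_one_X]
  · intro i hi hij
    rw [coeff_X_add_C_mul_X_pow_of_lt _ (by omega), coeff_X, if_neg (by omega)]
end

section
/- Let k be a field of characteristic p > 0, let c ∈ k, and let j ≥ 1 be an integer. Then there exists a formal power series Φ ∈ PowerSeries k with constant coefficient 0, unit coefficient of X, and Φ^p = X^p + c·X^{(j+1)·p}, if and only if c is a p-th power in k (there exists b ∈ k with b^p = c). -/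
/-! In characteristic `p`, `Φ ^ p` is obtained from `Φ` by raising every coefficient to the
`p`-th power and substituting `X ^ p` for `X`. Comparing the coefficients of `X ^ ((j + 1) * p)`
in `Φ ^ p = X ^ p + c X ^ ((j + 1) * p)` therefore gives `c = (coeff (j + 1) Φ) ^ p`.
Conversely, if `c = b ^ p` then `Φ = X + b X ^ (j + 1)` works, by additivity of Frobenius. -/

open PowerSeries

namespace PowerSeries

variable {R : Type*} [CommRing R]

instance charP (p : ℕ) [CharP R p] : CharP R⟦X⟧ p :=
  charP_of_injective_ringHom C_injective p

variable (p : ℕ) [ExpChar R p]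

theorem map_frobenius_expand (f : R⟦X⟧) :
    (f.expand p (expChar_ne_zero R p)).map (frobenius R p) = f ^ p :=
  MvPowerSeries.map_frobenius_expand p _

theorem coeff_mul_expChar_pow (f : R⟦X⟧) (n : ℕ) :
    coeff (n * p) (f ^ p) = coeff n f ^ p := by
  rw [← map_frobenius_expand, coeff_map, mul_comm, coeff_expand_mul, frobenius_def]

end PowerSeries

theorem sharpness_positive_char
    (k : Type) [Field k] (p : ℕ) (hp : p.Prime) [CharP k p]
    (c : k) (j : ℕ) (hj : 1 ≤ j) :
    (∃ Φ : PowerSeries k,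
        PowerSeries.constantCoeff Φ = 0 ∧
        IsUnit (PowerSeries.coeff 1 Φ) ∧
        Φ ^ p = PowerSeries.X ^ p
          + PowerSeries.C c * PowerSeries.X ^ ((j + 1) * p)) ↔
    ∃ b : k, b ^ p = c := by
  have : Fact p.Prime := ⟨hp⟩
  have hjp : (j + 1) * p ≠ p := by
    simpa using (Nat.mul_left_inj hp.ne_zero).not.mpr (by omega : j + 1 ≠ 1)
  constructor
  · rintro ⟨Φ, -, -, hΦ⟩
    refine ⟨coeff (j + 1) Φ, ?_⟩
    simpa [hΦ, coeff_X_pow, hjp] using (coeff_mul_expChar_pow p Φ (j + 1)).symm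
  · rintro ⟨b, rfl⟩
    refine ⟨X + C b * X ^ (j + 1), by simp, ?_, ?_⟩
    · simp [coeff_X_pow, show j ≠ 0 by omega]
    · rw [add_pow_char, mul_pow, ← map_pow, ← pow_mul]
end

section
/- Let k be a field of characteristic p > 0 and let c ∈ k. Then there exists a formal power series Φ ∈ PowerSeries k with constant coefficient 0 and Φ^p = c·X^p if and only if c is a p-th power in k (there exists b ∈ k with b^p = c). -/
/-
Writing `Φ = X ψ`, the equation `Φ ^ p = c X ^ p` becomes `ψ ^ p = c` after cancelling the
non-zero-divisor `X ^ p`, so `b = ψ(0)` is a `p`-th root of `c`; conversely `Φ = b X` works.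
-/

namespace PowerSeries

theorem exists_pow_eq_C_mul_X_pow_iff {R : Type*} [CommSemiring R] (n : ℕ) (c : R) :
    (∃ Φ : R⟦X⟧, constantCoeff Φ = 0 ∧ Φ ^ n = C c * X ^ n) ↔ ∃ b : R, b ^ n = c := by
  constructor
  · rintro ⟨Φ, hΦ₀, hΦ⟩
    obtain ⟨ψ, rfl⟩ := X_dvd_iff.2 hΦ₀
    have hψ : ψ ^ n = C c := X_pow_mul_cancel <| by rw [← mul_pow, hΦ, mul_comm]
    exact ⟨constantCoeff ψ, by simpa using congrArg constantCoeff hψ⟩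
  · rintro ⟨b, rfl⟩
    exact ⟨C b * X, by simp, by rw [mul_pow, map_pow]⟩

end PowerSeries

theorem sharpness_j_zero_char_p_general
    (k : Type) [Field k] (p : ℕ) (c : k) :
    (∃ Φ : PowerSeries k,
        PowerSeries.constantCoeff Φ = 0 ∧
        Φ ^ p = PowerSeries.C c * PowerSeries.X ^ p) ↔
    ∃ b : k, b ^ p = c :=
  PowerSeries.exists_pow_eq_C_mul_X_pow_iff p c

theorem sharpness_j_zero_char_p
    (k : Type) [Field k] (p : ℕ) (hp : p.Prime) [CharP k p] (c : k) :
    (∃ Φ : PowerSeries k,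
        PowerSeries.constantCoeff Φ = 0 ∧
        Φ ^ p = PowerSeries.C c * PowerSeries.X ^ p) ↔
    ∃ b : k, b ^ p = c :=
  sharpness_j_zero_char_p_general k p c
end
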